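/- Let M be a deterministic program and let μ' be a belief, i.e., a probability distribution on ℍ with μ'(h) > 0 for all h ∈ ℍ. Then M is non-interferent if and only if BE[⟨μ',h,ℓ⟩](M) ≤ 0 for all h ∈ ℍ and ℓ ∈ 𝕃. -/
import Mathlib


/-!
Statement 3: For a deterministic program `M : ℍ × 𝕃 → 𝕆` and a belief `μ'`
(a distribution on `ℍ` with `μ'(h) > 0` for all `h`), `M` is non-interferent
iff `BE[⟨μ',h,ℓ⟩](M) ≤ 0` for all `h ∈ ℍ` and `ℓ ∈ 𝕃`.
-/

variable {Hi Li Oi : Type*}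

/-- Relative entropy (distance) `D(μ → μ') = Σ_h μ'(h) · log₂(μ'(h)/μ(h))`. -/
noncomputable def relD {X : Type*} [Fintype X] (μ μ' : X → ℝ) : ℝ :=
  ∑ x, μ' x * Real.logb 2 (μ' x / μ x)

/-- The point-mass distribution `ḣ` at `h`. -/
noncomputable def pointMass {X : Type*} [DecidableEq X] (h : X) : X → ℝ :=
  fun h' => if h = h' then 1 else 0

/-- The updated belief `μ|o_E`: `(μ|o_E)(h) = μ(h)/μ_{ℓ_E}(o_E)` if
`M(h,ℓ_E) = o_E` and `0` otherwise, where `μ_{ℓ_E}(o_E) = Σ_{M(h,ℓ_E)=o_E} μ(h)`. -/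
noncomputable def postBelief [Fintype Hi] [DecidableEq Oi]
    (M : Hi × Li → Oi) (μ : Hi → ℝ) (ℓE : Li) (oE : Oi) : Hi → ℝ :=
  fun h => if M (h, ℓE) = oE then μ h / (∑ h', if M (h', ℓE) = oE then μ h' else 0) else 0

/-- Belief-based quantitative information flow
`BE[⟨μ,h_E,ℓ_E⟩](M) = D(μ → ḣ_E) − D(μ|o_E → ḣ_E)` with `o_E = M(h_E,ℓ_E)`. -/
noncomputable def BE [Fintype Hi] [DecidableEq Hi] [DecidableEq Oi]
    (M : Hi × Li → Oi) (μ : Hi → ℝ) (hE : Hi) (ℓE : Li) : ℝ :=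
  relD μ (pointMass hE) - relD (postBelief M μ ℓE (M (hE, ℓE))) (pointMass hE)

lemma relD_pointMass {X : Type*} [Fintype X] [DecidableEq X] (μ : X → ℝ) (h : X) :
    relD μ (pointMass h) = Real.logb 2 (1 / μ h) := by
  unfold relD pointMass
  rw [Finset.sum_eq_single h]
  · simp
  · intro b _ hb
    simp [(Ne.symm hb : ¬ h = b)]
  · simp

lemma BE_eq [Fintype Hi] [DecidableEq Hi] [DecidableEq Oi]
    (M : Hi × Li → Oi) (μ : Hi → ℝ) (hpos : ∀ h, 0 < μ h) (hE : Hi) (ℓE : Li) :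
    BE M μ hE ℓE =
      - Real.logb 2 (∑ h', if M (h', ℓE) = M (hE, ℓE) then μ h' else 0) := by
  set S : ℝ := ∑ h', if M (h', ℓE) = M (hE, ℓE) then μ h' else 0 with hS
  have hSpos : 0 < S := by
    have h1 : μ hE ≤ S := by
      refine Finset.single_le_sum (f := fun h' => if M (h', ℓE) = M (hE, ℓE) then μ h' else 0)
        (fun i _ => ?_) (Finset.mem_univ hE) |>.trans_eq' (by simp)
      split
      exacts [(hpos i).le, le_rfl]
    exact lt_of_lt_of_le (hpos hE) h1
  have hpost : postBelief M μ ℓE (M (hE, ℓE)) hE = μ hE / S := by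
    simp [postBelief, hS]
  unfold BE
  rw [relD_pointMass, relD_pointMass, hpost]
  have hμ : (0:ℝ) < μ hE := hpos hE
  rw [one_div, one_div, Real.logb_inv, Real.logb_inv,
    Real.logb_div hμ.ne' hSpos.ne']
  ring

/-- A program is non-interferent iff `BE[⟨μ',h,ℓ⟩](M) ≤ 0` for all `h` and `ℓ`
(for any belief `μ'`, i.e. any everywhere-positive distribution on `ℍ`). -/
theorem noninterferent_iff_BE_le_zero
    [Fintype Hi] [Fintype Li] [Fintype Oi] [DecidableEq Hi] [DecidableEq Oi]
    [Nonempty Hi] [Nonempty Li]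
    (M : Hi × Li → Oi) (μ' : Hi → ℝ)
    (hpos : ∀ h, 0 < μ' h) (hsum : ∑ h, μ' h = 1) :
    (∀ (h h' : Hi) (ℓ : Li), M (h, ℓ) = M (h', ℓ)) ↔
      (∀ (h : Hi) (ℓ : Li), BE M μ' h ℓ ≤ 0) := by
  constructor
  · intro hni h ℓ
    have : (∑ h', if M (h', ℓ) = M (h, ℓ) then μ' h' else 0) = 1 := by
      rw [← hsum]
      exact Finset.sum_congr rfl (fun i _ => by simp [hni i h ℓ])
    rw [BE_eq M μ' hpos, this]
    simp
  · intro hbe h h' ℓ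
    have key : (∑ x, if M (x, ℓ) = M (h, ℓ) then μ' x else 0) = 1 := by
      set S : ℝ := ∑ x, if M (x, ℓ) = M (h, ℓ) then μ' x else 0 with hS
      have hSpos : 0 < S := by
        have h1 : μ' h ≤ S := by
          refine Finset.single_le_sum (f := fun x => if M (x, ℓ) = M (h, ℓ) then μ' x else 0)
            (fun i _ => ?_) (Finset.mem_univ h) |>.trans_eq' (by simp)
          split
          exacts [(hpos i).le, le_rfl]
        exact lt_of_lt_of_le (hpos h) h1
      have hSle : S ≤ 1 := by
        rw [← hsum]
        exact Finset.sum_le_sum (fun i _ => by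
          split <;> [exact le_refl _; exact (hpos i).le])
      have hb := hbe h ℓ
      rw [BE_eq M μ' hpos, neg_le, neg_zero] at hb
      by_contra hne
      have hlt : S < 1 := lt_of_le_of_ne hSle hne
      have := Real.logb_neg (b := 2) (by norm_num) hSpos hlt
      linarith
    by_contra hne
    have hlt : (∑ x, if M (x, ℓ) = M (h, ℓ) then μ' x else 0) < ∑ x, μ' x := by
      refine Finset.sum_lt_sum (fun i _ => by
        split <;> [exact le_refl _; exact (hpos i).le]) ⟨h', Finset.mem_univ h', ?_⟩
      rw [if_neg (fun e => hne e.symm)]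
      exact hpos h'
    rw [key, hsum] at hlt
    exact lt_irrefl 1 hlt
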